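/- arXiv:2501.08823 — 7 statements merged into one kernel-verified Lean document; each statement's English description precedes it below -/
import Mathlib

section
/- For every n ∈ ℕ, the n-th row of the Hurt-Sada array is a permutation of ℕ; that is, the map k ↦ A(n,k) is a bijection from ℕ to ℕ. -/
/-- The Hurt-Sada array `A : ℕ → ℕ → ℕ`.  Row `0` is the identity sequence;
row `n+1` is obtained from row `n` by moving the entry `n+1` (located at the unique
position `p` with `A n p = n+1`) by `n+1` places to the right, shifting the jumped-over
entries one place left. -/
noncomputable def A : ℕ → ℕ → ℕ
  | 0, k => k
  | n + 1, j =>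
    let p := sInf {i | A n i = n + 1}
    if j < p then A n j
    else if j < p + (n + 1) then A n (j + 1)
    else if j = p + (n + 1) then n + 1
    else A n j

/-- The index permutation used to pass from row `n` to row `n+1`. -/
def sigmaFun (p m : ℕ) : ℕ → ℕ := fun j =>
  if j < p then j else if j < p + m then j + 1 else if j = p + m then p else j

def tauFun (p m : ℕ) : ℕ → ℕ := fun j =>
  if j < p then j else if j = p then p + m else if j ≤ p + m then j - 1 else j

lemma sigma_bij (p m : ℕ) (hm : 0 < m) : Function.Bijective (sigmaFun p m) := by
  apply Function.bijective_iff_has_inverse.mpr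
  refine ⟨tauFun p m, fun j => ?_, fun j => ?_⟩ <;>
    · simp only [sigmaFun, tauFun]
      split_ifs <;> omega

theorem hurt_sada_row_bijective (n : ℕ) :
    Function.Bijective (fun k => A n k) := by
  induction n with
  | zero =>
    have : (fun k => A 0 k) = id := by funext k; rfl
    rw [this]; exact Function.bijective_id
  | succ n ih =>
    obtain ⟨i, hi⟩ := ih.surjective (n + 1)
    have hne : {i | A n i = n + 1}.Nonempty := ⟨i, hi⟩
    have hpmem : A n (sInf {i | A n i = n + 1}) = n + 1 := Nat.sInf_mem hne
    have hEq : (fun k => A (n + 1) k)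
        = (fun k => A n k) ∘ sigmaFun (sInf {i | A n i = n + 1}) (n + 1) := by
      funext j
      simp only [Function.comp, A, sigmaFun]
      split_ifs <;> first | rfl | (exact hpmem.symm) | omega
    rw [hEq]
    exact ih.comp (sigma_bij _ (n + 1) (Nat.succ_pos n))
end

section
/- Every integer eventually returns to its starting position in its own column of the Hurt-Sada array: for each n ∈ ℕ there exists m ∈ ℕ such that A(x,n) = n for all x ≥ m. -/
/-- Position of the value `x+1` in row `x` (used to build row `x+1`). -/
noncomputable def P (x : ℕ) : ℕ := sInf {i | A x i = x + 1}

lemma A_zero (k : ℕ) : A 0 k = k := by rw [A]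

lemma A_succ (x j : ℕ) : A (x+1) j =
    if j < P x then A x j
    else if j < P x + (x + 1) then A x (j + 1)
    else if j = P x + (x + 1) then x + 1
    else A x j := by
  rw [A]; rfl

lemma A_succ_low {x j : ℕ} (h : j < P x) : A (x+1) j = A x j := by
  rw [A_succ, if_pos h]

lemma A_succ_mid {x j : ℕ} (h1 : P x ≤ j) (h2 : j < P x + (x+1)) :
    A (x+1) j = A x (j+1) := by
  rw [A_succ, if_neg (by omega), if_pos h2]

lemma A_succ_top (x : ℕ) : A (x+1) (P x + (x+1)) = x + 1 := by
  rw [A_succ, if_neg (by omega), if_neg (by omega), if_pos rfl]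

lemma A_succ_high {x j : ℕ} (h : P x + (x+1) < j) : A (x+1) j = A x j := by
  rw [A_succ, if_neg (by omega), if_neg (by omega), if_neg (by omega)]

/-- The row invariant: values `≤ x` appear in increasing order, values `> x`
appear in increasing order, every value appears, and all values `≤ x` occur at
positions `< P x + (x+1)`. -/
structure HSInv (x : ℕ) : Prop where
  S : ∀ i j, i < j → A x i ≤ x → A x j ≤ x → A x i < A x j
  B : ∀ i j, i < j → x < A x i → x < A x j → A x i < A x j
  E : ∀ v, ∃ i, A x i = v
  M : ∀ i, A x i ≤ x → i < P x + (x + 1)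

lemma hs_inj {x : ℕ} (h : HSInv x) : Function.Injective (A x) := by
  intro i j hij
  by_contra hne
  rcases lt_or_ge i j with hlt | hge
  · rcases le_or_gt (A x i) x with hs | hb
    · exact absurd (h.S i j hlt hs (hij ▸ hs)) (by omega)
    · exact absurd (h.B i j hlt hb (hij ▸ hb)) (by omega)
  · have hlt : j < i := lt_of_le_of_ne hge (Ne.symm hne)
    rcases le_or_gt (A x j) x with hs | hb
    · exact absurd (h.S j i hlt hs (hij ▸ hs)) (by omega)
    · exact absurd (h.B j i hlt hb (hij ▸ hb)) (by omega)

lemma A_P {x : ℕ} (h : HSInv x) : A x (P x) = x + 1 := by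
  obtain ⟨i, hi⟩ := h.E (x + 1)
  exact Nat.sInf_mem (⟨i, hi⟩ : {i | A x i = x + 1}.Nonempty)

/-- Everything strictly left of `P x` is a small value. -/
lemma P_low {x : ℕ} (h : HSInv x) : ∀ i, i < P x → A x i ≤ x := by
  intro i hi
  by_contra hb
  push_neg at hb
  have hP := A_P h
  have := h.B i (P x) hi hb (by omega)
  omega

/-- Left of `P x` the row is the identity. -/
lemma A_prefix {x : ℕ} (h : HSInv x) : ∀ j, j < P x → A x j = j := by
  intro j
  induction j using Nat.strong_induction_on with
  | _ j ih =>
    intro hj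
    have hsmall : A x j ≤ x := P_low h j hj
    have hge : j ≤ A x j := by
      by_contra hlt
      push_neg at hlt
      have h1 : A x (A x j) = A x j := ih (A x j) hlt (lt_trans hlt hj)
      have := hs_inj h h1
      omega
    obtain ⟨i, hi⟩ := h.E j
    rcases Nat.lt_trichotomy i j with hlt | heq | hgt
    · have : A x i = i := ih i hlt (lt_trans hlt hj)
      omega
    · subst heq; omega
    · have : A x i ≤ x := by omega
      have := h.S j i hgt hsmall this
      omega

lemma hs_inv_zero : HSInv 0 where
  S := by intro i j hij hi hj; simp only [A_zero] at hi hj ⊢; omega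
  B := by intro i j hij hi hj; simp only [A_zero] at hi hj ⊢; omega
  E := fun v => ⟨v, A_zero v⟩
  M := by
    intro i hi
    rw [A_zero] at hi
    omega

lemma hs_inv_succ {x : ℕ} (h : HSInv x) : HSInv (x + 1) := by
  have hP := A_P h
  have hlow := P_low h
  -- transport: every new position other than `P x + (x+1)` carries an old value
  -- from a position ≠ P x, in an order-preserving way.
  have hτ : ∀ j, j ≠ P x + (x + 1) →
      ∃ i, A (x+1) j = A x i ∧ i ≠ P x ∧ j ≤ i ∧ i ≤ j + 1 ∧
        (j < P x → i = j) ∧ (P x ≤ j → (j < P x + (x+1) ∧ i = j + 1) ∨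
          (P x + (x+1) < j ∧ i = j)) := by
    intro j hj
    rcases Nat.lt_trichotomy j (P x) with h1 | h1 | h1
    · exact ⟨j, A_succ_low h1, by omega, by omega, by omega, by omega, by omega⟩
    · refine ⟨j + 1, A_succ_mid (by omega) (by omega), by omega, by omega, by omega,
        by omega, fun _ => Or.inl ⟨by omega, rfl⟩⟩
    · rcases Nat.lt_trichotomy j (P x + (x+1)) with h2 | h2 | h2
      · exact ⟨j + 1, A_succ_mid (by omega) h2, by omega, by omega, by omega,
          by omega, fun _ => Or.inl ⟨h2, rfl⟩⟩
      · exact absurd h2 hj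
      · exact ⟨j, A_succ_high h2, by omega, by omega, by omega, by omega,
          fun _ => Or.inr ⟨h2, rfl⟩⟩
  have htop : A (x+1) (P x + (x+1)) = x + 1 := A_succ_top x
  -- order preservation of the transport
  have hord : ∀ i j ki kj, i < j → i ≠ P x + (x+1) → j ≠ P x + (x+1) →
      (i ≤ ki) → (ki ≤ i + 1) → (i < P x → ki = i) →
      (P x ≤ i → (i < P x + (x+1) ∧ ki = i + 1) ∨ (P x + (x+1) < i ∧ ki = i)) →
      (j ≤ kj) → (kj ≤ j + 1) → (j < P x → kj = j) →
      (P x ≤ j → (j < P x + (x+1) ∧ kj = j + 1) ∨ (P x + (x+1) < j ∧ kj = j)) →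
      ki < kj := by
    intro i j ki kj hij hi hj h1 h2 h3 h4 h5 h6 h7 h8
    rcases lt_or_ge i (P x) with hi1 | hi1
    · have := h3 hi1
      rcases lt_or_ge j (P x) with hj1 | hj1
      · have := h7 hj1; omega
      · rcases h8 hj1 with ⟨_, _⟩ | ⟨_, _⟩ <;> omega
    · rcases h4 hi1 with ⟨hia, hib⟩ | ⟨hia, hib⟩
      · rcases lt_or_ge j (P x) with hj1 | hj1
        · omega
        · rcases h8 hj1 with ⟨_, _⟩ | ⟨_, _⟩ <;> omega
      · rcases h8 (by omega) with ⟨_, _⟩ | ⟨_, _⟩ <;> omega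
  -- no small value of the new row sits beyond `P x + (x+1)`
  have hnos : ∀ j, P x + (x+1) < j → ¬ A (x+1) j ≤ x + 1 := by
    intro j hjgt hle
    obtain ⟨i, hAi, hip, hji, _, _, hmid⟩ := hτ j (by omega)
    rcases hmid (by omega) with ⟨hc, _⟩ | ⟨_, hc⟩
    · omega
    · subst hc
      rw [hAi] at hle
      rcases lt_or_ge (A x i) (x+1) with hs | hb
      · have := h.M i (by omega)
        omega
      · have hx1 : A x i = x + 1 := by omega
        exact hip (hs_inj h (hx1.trans hP.symm))
  -- surjectivity of the new row
  have hE1 : ∀ v, ∃ j, A (x+1) j = v := by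
    intro v
    rcases eq_or_ne v (x + 1) with rfl | hv
    · exact ⟨P x + (x+1), htop⟩
    · obtain ⟨i, hi⟩ := h.E v
      have hip : i ≠ P x := fun hc => hv (by rw [← hi, hc, hP])
      rcases Nat.lt_trichotomy i (P x) with h1 | h1 | h1
      · exact ⟨i, by rw [A_succ_low h1, hi]⟩
      · exact absurd h1 hip
      · rcases le_or_gt i (P x + (x+1)) with h2 | h2
        · refine ⟨i - 1, ?_⟩
          rw [A_succ_mid (by omega) (by omega)]
          have h5 : i - 1 + 1 = i := by omega
          rw [h5, hi]
        · exact ⟨i, by rw [A_succ_high h2, hi]⟩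
  -- monotonicity of P
  have hPm : A (x+1) (P (x+1)) = x + 2 := by
    obtain ⟨j, hj⟩ := hE1 (x + 2)
    exact Nat.sInf_mem (⟨j, hj⟩ : {i | A (x+1) i = (x+1) + 1}.Nonempty)
  have hmono : P x ≤ P (x+1) := by
    by_contra hc
    push_neg at hc
    rw [A_succ_low hc] at hPm
    have := hlow _ hc
    omega
  constructor
  · -- smalls increasing
    intro i j hij hi hj
    rcases eq_or_ne j (P x + (x+1)) with rfl | hjne
    · rw [htop]
      obtain ⟨k, hAk, hkp, _, _, _, _⟩ := hτ i (by omega)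
      have hkne : A x k ≠ x + 1 := fun hc => hkp (hs_inj h (hc.trans hP.symm))
      rw [hAk] at hi ⊢
      omega
    · rcases eq_or_ne i (P x + (x+1)) with rfl | hine
      · exact absurd hj (hnos j hij)
      · obtain ⟨k, hAk, hkp, hk1, hk2, hk3, hk4⟩ := hτ i hine
        obtain ⟨l, hAl, hlp, hl1, hl2, hl3, hl4⟩ := hτ j hjne
        have hkl : k < l := hord i j k l hij hine hjne hk1 hk2 hk3 hk4 hl1 hl2 hl3 hl4
        have hkne : A x k ≠ x + 1 := fun hc => hkp (hs_inj h (hc.trans hP.symm))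
        have hlne : A x l ≠ x + 1 := fun hc => hlp (hs_inj h (hc.trans hP.symm))
        rw [hAk] at hi ⊢
        rw [hAl] at hj ⊢
        exact h.S k l hkl (by omega) (by omega)
  · -- bigs increasing
    intro i j hij hi hj
    have hine : i ≠ P x + (x+1) := by intro hc; rw [hc, htop] at hi; omega
    have hjne : j ≠ P x + (x+1) := by intro hc; rw [hc, htop] at hj; omega
    obtain ⟨k, hAk, hkp, hk1, hk2, hk3, hk4⟩ := hτ i hine
    obtain ⟨l, hAl, hlp, hl1, hl2, hl3, hl4⟩ := hτ j hjne
    have hkl : k < l := hord i j k l hij hine hjne hk1 hk2 hk3 hk4 hl1 hl2 hl3 hl4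
    rw [hAk] at hi ⊢
    rw [hAl] at hj ⊢
    exact h.B k l hkl (by omega) (by omega)
  · exact hE1
  · -- boundedness of smalls
    intro i hi
    by_contra hcon
    push_neg at hcon
    have h2 : P x + (x+1) < i := by omega
    exact (hnos i h2) hi

lemma hs_inv (x : ℕ) : HSInv x := by
  induction x with
  | zero => exact hs_inv_zero
  | succ n ih => exact hs_inv_succ ih

lemma P_mono : Monotone P := by
  apply monotone_nat_of_le_succ
  intro x
  have h := hs_inv x
  have h1 := hs_inv (x + 1)
  have hPm : A (x+1) (P (x+1)) = x + 2 := A_P h1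
  by_contra hc
  push_neg at hc
  rw [A_succ_low hc] at hPm
  have := P_low h _ hc
  omega

/-- Drift of the value `x+1` leftward: if `P` is constant equal to `pstar` from row `X`
on, then at row `x+1+k` (for `k ≤ x`, `x ≥ X`) the value `x+1` sits at position
`pstar + 1 + (x - k)`. -/
lemma drift {X pstar : ℕ} (hconst : ∀ y, X ≤ y → P y = pstar) {x : ℕ} (hx : X ≤ x) :
    ∀ k, k ≤ x → A (x + 1 + k) (pstar + 1 + (x - k)) = x + 1 := by
  intro k
  induction k with
  | zero =>
    intro _
    have hPx : P x = pstar := hconst x hx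
    have htop := A_succ_top x
    rw [hPx] at htop
    have h3 : pstar + 1 + (x - 0) = pstar + (x + 1) := by omega
    rw [h3]
    exact htop
  | succ k ih =>
    intro hk
    have hIH := ih (by omega)
    have hy : X ≤ x + 1 + k := by omega
    have hPy : P (x + 1 + k) = pstar := hconst _ hy
    have hstep : x + 1 + (k + 1) = (x + 1 + k) + 1 := by omega
    rw [hstep]
    have hmid := A_succ_mid (x := x + 1 + k) (j := pstar + 1 + (x - (k+1)))
      (by rw [hPy]; omega) (by rw [hPy]; omega)
    rw [hmid]
    have h3 : pstar + 1 + (x - (k+1)) + 1 = pstar + 1 + (x - k) := by omega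
    rw [h3, hIH]

lemma P_unbounded (N : ℕ) : ∃ m, N < P m := by
  by_contra hcon
  push_neg at hcon
  have hbdd : BddAbove (Set.range P) := ⟨N, by rintro _ ⟨y, rfl⟩; exact hcon y⟩
  obtain ⟨X, hX⟩ := Nat.sSup_mem (Set.range_nonempty P) hbdd
  set pstar := sSup (Set.range P) with hps
  have hconst : ∀ y, X ≤ y → P y = pstar := by
    intro y hy
    have h1 : P y ≤ pstar := le_csSup hbdd ⟨y, rfl⟩
    have h2 : pstar ≤ P y := hX ▸ P_mono hy
    omega
  have hpsN : pstar ≤ N := by rw [← hX]; exact hcon X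
  set x := X + pstar + 1 with hxdef
  have hdrift := drift hconst (x := x) (by omega) x (le_refl x)
  simp only [Nat.sub_self, Nat.add_zero] at hdrift
  -- hdrift : A (x+1+x) (pstar + 1) = x + 1
  set z := x + 1 + x with hz
  have hzX : X ≤ z := by omega
  have hPz : P z = pstar := hconst z hzX
  have hsz := hs_inv z
  have hAzp : A z pstar = z + 1 := by
    have := A_P hsz
    rwa [hPz] at this
  obtain ⟨i, hi⟩ := hsz.E pstar
  rcases Nat.lt_trichotomy i pstar with h1 | h1 | h1
  · have := A_prefix hsz i (by rw [hPz]; omega)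
    omega
  · rw [h1, hAzp] at hi; omega
  · rcases Nat.lt_trichotomy i (pstar + 1) with h2 | h2 | h2
    · omega
    · rw [h2, hdrift] at hi; omega
    · have := hsz.S (pstar + 1) i h2 (by rw [hdrift]; omega) (by rw [hi]; omega)
      rw [hdrift, hi] at this
      omega

theorem hurt_sada_eventually_returns (n : ℕ) :
    ∃ m : ℕ, ∀ x ≥ m, A x n = n := by
  obtain ⟨m, hm⟩ := P_unbounded n
  refine ⟨m, fun x hx => ?_⟩
  have hPx : n < P x := lt_of_lt_of_le hm (P_mono hx)
  exact A_prefix (hs_inv x) n hPx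
end

section
/- For every n ≥ 1, the integer n first leaves the n-th column of the Hurt-Sada array at row ⌊(n+1)/φ⌋; that is, A(i,n) = n for all i < ⌊(n+1)/φ⌋, and A(⌊(n+1)/φ⌋, n) ≠ n. -/
/-- The golden ratio `(1 + √5)/2`. -/
noncomputable def phi : ℝ := (1 + Real.sqrt 5) / 2

/-!
Write `q v = ⌊(v + 1)/φ⌋`. The entry `v` stays at position `v` up to row `q v`, then drifts one
place to the left per row (each larger entry jumping over it), jumps `v` places to the right in
row `v`, drifts left again, and is back at position `v`, for good, from row `q v + v` on.
That this closed form `position m v` is compatible with the construction reduces to the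
Beatty-type equivalence `a < q b ↔ q a + a < b`: since `1/φ + 1 = φ` we have
`q a + a + 1 = ⌊(a + 1)φ⌋`, and `(a + 1)φ` is never an integer. Each row is the previous one
composed with an injective cyclic shift, so every row is injective, and `v` has moved away
from position `v` in row `q v`.
-/

lemma phi_eq_goldenRatio : phi = Real.goldenRatio := rfl

lemma phi_pos : 0 < phi := Real.goldenRatio_pos

/-- `q v` of the proof sketch. -/
noncomputable def leaveRow (v : ℕ) : ℕ := ⌊((v : ℝ) + 1) / phi⌋₊

lemma leaveRow_add_self_add_one (a : ℕ) :
    leaveRow a + a + 1 = ⌊((a : ℝ) + 1) * phi⌋₊ := by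
  have h : ((a : ℝ) + 1) * phi = ((a : ℝ) + 1) / phi + ((a + 1 : ℕ) : ℝ) := by
    rw [div_eq_mul_inv, phi_eq_goldenRatio, Real.inv_goldenRatio, ← Real.one_sub_goldenRatio]
    push_cast
    ring
  rw [h, Nat.floor_add_natCast (by positivity [phi_pos])]
  rfl

lemma lt_leaveRow_iff (a b : ℕ) : a < leaveRow b ↔ leaveRow a + a < b := by
  have hne : ((a : ℝ) + 1) * phi ≠ (b : ℝ) + 1 := by
    have := (Real.goldenRatio_irrational.natCast_mul a.succ_ne_zero).ne_nat (b + 1)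
    push_cast at this
    exact this
  calc a < leaveRow b ↔ ((a : ℝ) + 1) * phi ≤ (b : ℝ) + 1 := by
        rw [leaveRow, Nat.lt_iff_add_one_le, Nat.le_floor_iff (by positivity [phi_pos]),
          le_div_iff₀ phi_pos]
        push_cast
        ring_nf
    _ ↔ ((a : ℝ) + 1) * phi < (b : ℝ) + 1 := ⟨fun h => h.lt_of_ne hne, le_of_lt⟩
    _ ↔ ⌊((a : ℝ) + 1) * phi⌋₊ < b + 1 := by
        rw [Nat.floor_lt (by positivity [phi_pos])]
        push_cast
        ring_nf
    _ ↔ leaveRow a + a < b := by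
        rw [← leaveRow_add_self_add_one]
        omega

lemma leaveRow_le_self (v : ℕ) : leaveRow v ≤ v := by
  have := lt_leaveRow_iff v v
  omega

lemma leaveRow_mono : Monotone leaveRow := fun a b hab =>
  Nat.floor_mono <| div_le_div_of_nonneg_right (by exact_mod_cast Nat.add_le_add_right hab 1)
    phi_pos.le

noncomputable def position (m v : ℕ) : ℕ :=
  if m < leaveRow v then v
  else if m < v then v + leaveRow v - 1 - m
  else if m ≤ leaveRow v + v then leaveRow v + 2 * v - m
  else v

lemma position_zero (v : ℕ) : position 0 v = v := by
  have := lt_leaveRow_iff 0 v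
  have := leaveRow_le_self 0
  unfold position
  split_ifs <;> omega

lemma position_self (m : ℕ) : position m (m + 1) = leaveRow (m + 1) := by
  have := leaveRow_le_self (m + 1)
  unfold position
  split_ifs <;> omega

lemma position_leaveRow_ne_self {v : ℕ} (hv : 1 ≤ v) : position (leaveRow v) v ≠ v := by
  have := leaveRow_le_self v
  unfold position
  split_ifs <;> omega

def cycleRight (p k j : ℕ) : ℕ :=
  if j < p then j
  else if j < p + k then j + 1
  else if j = p + k then p
  else j

lemma cycleRight_injective (p k : ℕ) : Function.Injective (cycleRight p k) := by
  intro i j h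
  unfold cycleRight at h
  split_ifs at h <;> omega

lemma cycleRight_position (m v : ℕ) :
    cycleRight (leaveRow (m + 1)) (m + 1) (position (m + 1) v) = position m v := by
  have := lt_leaveRow_iff (m + 1) v
  have := lt_leaveRow_iff v (m + 1)
  have := leaveRow_le_self v
  have := @leaveRow_mono (m + 1) v
  have := @leaveRow_mono v (m + 1)
  unfold cycleRight position
  split_ifs <;> omega

lemma A_succ_eq_comp {n p : ℕ} (hp : sInf {i | A n i = n + 1} = p) (h : A n p = n + 1) :
    A (n + 1) = A n ∘ cycleRight p (n + 1) := by
  funext j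
  simp only [A, hp, Function.comp_apply, cycleRight]
  split_ifs <;> simp_all

lemma sInf_setOf_eq_of_injective {f : ℕ → ℕ} (hf : Function.Injective f) {p c : ℕ} (hp : f p = c) :
    sInf {i | f i = c} = p := by
  have : {i | f i = c} = {p} := Set.ext fun _ => hp ▸ hf.eq_iff
  rw [this, csInf_singleton]

lemma A_injective_and_apply_position (m : ℕ) :
    Function.Injective (A m) ∧ ∀ v, A m (position m v) = v := by
  induction m with
  | zero => exact ⟨fun _ _ h => h, fun v => position_zero v⟩
  | succ m ih =>
    obtain ⟨hinj, hpos⟩ := ih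
    have hrow : A m (leaveRow (m + 1)) = m + 1 := position_self m ▸ hpos (m + 1)
    rw [A_succ_eq_comp (sInf_setOf_eq_of_injective hinj hrow) hrow]
    exact ⟨hinj.comp (cycleRight_injective _ _),
      fun v => by rw [Function.comp_apply, cycleRight_position, hpos]⟩

theorem hurt_sada_first_leaves (n : ℕ) (hn : 1 ≤ n) :
    (∀ i < ⌊((n : ℝ) + 1) / phi⌋₊, A i n = n) ∧
      A ⌊((n : ℝ) + 1) / phi⌋₊ n ≠ n := by
  refine ⟨fun i hi => ?_, fun h => ?_⟩
  · have hi : position i n = n := if_pos hi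
    simpa only [hi] using (A_injective_and_apply_position i).2 n
  · obtain ⟨hinj, hpos⟩ := A_injective_and_apply_position (leaveRow n)
    exact position_leaveRow_ne_self hn (hinj (h.trans (hpos n).symm)).symm
end

section
/- For every n ≥ 1, the position p(n) of the integer n in row n−1 of the Hurt-Sada array satisfies p(n) = ⌊(n+1)/φ⌋. -/
/-- `p n` is the (unique) position of `n` in row `n-1` of the Hurt-Sada array. -/
noncomputable def p (n : ℕ) : ℕ := sInf {i | A (n - 1) i = n}

/-!
The position of `m` in row `n` has an explicit closed form `rowPos n m`, written in terms of
`b m = ⌊(m + 1)/φ⌋` (`goldenPos`); one checks by induction on `n` that each step of the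
recursion moves the positions exactly as the closed form predicts. All the arithmetic this
needs comes from one fact: `b` is the lower adjoint of `k ↦ k + b k`, i.e.
`b m ≤ k ↔ m ≤ k + b k`. This holds because `(k + 1) φ = (k + 1) + (k + 1)/φ` and
`(k + 1)/φ` is irrational.
-/

theorem Irrational.natCast_lt_add_iff_le_add_floor {x : ℝ} (hx : Irrational x) (hx₀ : 0 ≤ x)
    (m k : ℕ) : (m : ℝ) < k + x ↔ m ≤ k + ⌊x⌋₊ := by
  constructor
  · intro h
    have : (m : ℝ) < (k + ⌊x⌋₊ + 1 : ℕ) := by push_cast; linarith [Nat.lt_floor_add_one x]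
    exact Nat.lt_succ_iff.mp (by exact_mod_cast this)
  · intro h
    have hle : (m : ℝ) ≤ k + x := by
      calc (m : ℝ) ≤ (k + ⌊x⌋₊ : ℕ) := by exact_mod_cast h
        _ ≤ k + x := by push_cast; linarith [Nat.floor_le hx₀]
    exact hle.lt_of_ne fun heq => (hx.natCast_add k).ne_nat m heq.symm

noncomputable def goldenPos (m : ℕ) : ℕ := ⌊((m : ℝ) + 1) / phi⌋₊

lemma phi_eq_one_add_inv : phi = 1 + phi⁻¹ := by
  rw [show phi = Real.goldenRatio from rfl, Real.inv_goldenRatio, ← sub_eq_add_neg,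
    Real.one_sub_goldenRatio]

theorem goldenPos_gc : GaloisConnection goldenPos (fun k => k + goldenPos k) := by
  intro m k
  have hx : Irrational (((k : ℝ) + 1) / phi) := by
    rw [div_eq_mul_inv]
    exact_mod_cast Real.goldenRatio_irrational.inv.natCast_mul (Nat.succ_ne_zero k)
  have hmul : ((k : ℝ) + 1) * phi = (k + 1) + (k + 1) / phi := by
    rw [div_eq_mul_inv]; nth_rw 1 [phi_eq_one_add_inv]; ring
  calc goldenPos m ≤ k ↔ ((m : ℝ) + 1) / phi < k + 1 := by
        rw [goldenPos, Nat.le_iff_lt_add_one, Nat.floor_lt (by positivity [phi_pos])]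
        push_cast; rfl
    _ ↔ (m : ℝ) < k + (k + 1) / phi := by
        rw [div_lt_iff₀ phi_pos, hmul]; constructor <;> intro h <;> linarith
    _ ↔ m ≤ k + goldenPos k := hx.natCast_lt_add_iff_le_add_floor (by positivity [phi_pos]) m k

lemma goldenPos_le_iff (m k : ℕ) : goldenPos m ≤ k ↔ m ≤ k + goldenPos k := goldenPos_gc m k

lemma goldenPos_mono : Monotone goldenPos := goldenPos_gc.monotone_l

lemma goldenPos_le_self (m : ℕ) : goldenPos m ≤ m := goldenPos_gc.l_le (Nat.le_add_right m _)

lemma goldenPos_zero : goldenPos 0 = 0 :=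
  Nat.le_zero.mp ((goldenPos_le_iff 0 0).mpr (Nat.zero_le _))

lemma goldenPos_eq_zero_iff {m : ℕ} : goldenPos m = 0 ↔ m = 0 := by
  rw [← Nat.le_zero, goldenPos_le_iff, goldenPos_zero, Nat.add_zero, Nat.le_zero]

lemma goldenPos_succ_le (k : ℕ) : goldenPos (k + 1) ≤ goldenPos k + 1 := by
  have hle : (((k + 1 : ℕ) : ℝ) + 1) / phi ≤ ((k : ℝ) + 1) / phi + 1 := by
    have : 1 / phi ≤ 1 := (div_le_one phi_pos).mpr Real.one_lt_goldenRatio.le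
    rw [Nat.cast_succ, add_right_comm, add_div]
    linarith
  calc goldenPos (k + 1) ≤ ⌊((k : ℝ) + 1) / phi + 1⌋₊ := Nat.floor_le_floor hle
    _ = goldenPos k + 1 := Nat.floor_add_one (by positivity [phi_pos])

/-- The closed form of the position of `m` in row `n` of `A`. -/
noncomputable def rowPos (n m : ℕ) : ℕ :=
  if m < goldenPos (n + 1) then m
  else if m ≤ n then 2 * m + goldenPos m - n
  else if m ≤ n + goldenPos n then m + goldenPos m - (n + 1)
  else m

lemma rowPos_zero (m : ℕ) : rowPos 0 m = m := by
  have := goldenPos_zero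
  have := goldenPos_le_self m
  unfold rowPos
  split_ifs <;> omega

lemma rowPos_self_succ (n : ℕ) : rowPos n (n + 1) = goldenPos (n + 1) := by
  have := goldenPos_le_self (n + 1)
  have := (goldenPos_eq_zero_iff (m := n)).not
  have := (goldenPos_eq_zero_iff (m := n + 1)).not
  unfold rowPos
  split_ifs <;> omega

lemma rowPos_succ_self (n : ℕ) : rowPos (n + 1) (n + 1) = goldenPos (n + 1) + (n + 1) := by
  have := goldenPos_le_iff (n + 1 + 1) (n + 1)
  have := (goldenPos_eq_zero_iff (m := n + 1)).not
  unfold rowPos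
  split_ifs <;> omega

lemma rowPos_succ_of_ne {n m : ℕ} (hm : m ≠ n + 1) :
    rowPos (n + 1) m =
      if rowPos n m < goldenPos (n + 1) ∨ goldenPos (n + 1) + (n + 1) < rowPos n m then rowPos n m
      else rowPos n m - 1 := by
  have := goldenPos_le_iff (n + 1) m
  have := goldenPos_le_iff (n + 1 + 1) m
  have := goldenPos_le_iff m n
  have := goldenPos_le_iff m (n + 1)
  have := goldenPos_le_iff (n + goldenPos n) n
  have := goldenPos_le_self (n + 1 + 1)
  have := goldenPos_succ_le n
  have := (goldenPos_eq_zero_iff (m := n)).not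
  have := goldenPos_mono (Nat.le_add_right n 1)
  have := goldenPos_mono (Nat.le_add_right (n + 1) 1)
  have := @goldenPos_mono m n
  have := @goldenPos_mono (n + 1) m
  have := @goldenPos_mono m (n + goldenPos n)
  unfold rowPos
  split_ifs <;> omega

lemma sInf_setOf_eq_of_iff {f pos : ℕ → ℕ} (hf : ∀ j m, f j = m ↔ pos m = j) (m : ℕ) :
    sInf {j | f j = m} = pos m := by
  have hset : {j | f j = m} = {pos m} := by
    ext j
    simp only [Set.mem_ofPred_eq, Set.mem_singleton_iff, hf, eq_comm]
  rw [hset, csInf_singleton]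

/-- Inverse form of one step of the recursion defining `A`: if `pos` locates the entries of `f`,
then `pos'` locates those of the row in which `v` has moved from `P` to `P + k`. -/
lemma ite_move_eq_iff {f pos pos' : ℕ → ℕ} {v P k : ℕ} (hf : ∀ j m, f j = m ↔ pos m = j)
    (hv : pos v = P) (hv' : pos' v = P + k)
    (hpos' : ∀ m ≠ v, pos' m = if pos m < P ∨ P + k < pos m then pos m else pos m - 1)
    (j m : ℕ) :
    (if j < P then f j else if j < P + k then f (j + 1) else if j = P + k then v else f j) = m ↔
      pos' m = j := by
  by_cases hm : m = v
  · subst hm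
    rw [hv']
    split_ifs with h₁ h₂ h₃
    · rw [hf, hv]; omega
    · rw [hf, hv]; omega
    · exact iff_of_true rfl h₃.symm
    · rw [hf, hv]; omega
  · have hne : pos m ≠ P := fun h => hm (((hf P m).mpr h).symm.trans ((hf P v).mpr hv))
    rw [hpos' m hm]
    split_ifs <;> (try rw [hf]) <;> omega

lemma A_eq_iff (n : ℕ) : ∀ j m, A n j = m ↔ rowPos n m = j := by
  induction n with
  | zero => simp [A, rowPos_zero, eq_comm]
  | succ n ih =>
    intro j m
    have hP : sInf {i | A n i = n + 1} = goldenPos (n + 1) := by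
      rw [sInf_setOf_eq_of_iff ih, rowPos_self_succ]
    rw [A, hP]
    exact ite_move_eq_iff ih (rowPos_self_succ n) (rowPos_succ_self n)
      (fun m hm => rowPos_succ_of_ne hm) j m

lemma rowPos_pred_self (n : ℕ) : rowPos (n - 1) n = goldenPos n := by
  cases n with
  | zero => rw [rowPos_zero, goldenPos_zero]
  | succ n => exact rowPos_self_succ n

theorem position_formula_general (n : ℕ) :
    p n = ⌊((n : ℝ) + 1) / phi⌋₊ := by
  rw [p, sInf_setOf_eq_of_iff (A_eq_iff (n - 1))]
  exact rowPos_pred_self n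

theorem position_formula (n : ℕ) (hn : 1 ≤ n) :
    p n = ⌊((n : ℝ) + 1) / phi⌋₊ :=
  position_formula_general n
end

section
/- No integer appears three or more times in Sada's sequence (s(n))_{n≥1}; that is, there do not exist indices 1 ≤ i < j < k and an integer m with s(i) = s(j) = s(k) = m. -/
/-- Sada's sequence: `s n` is the first element that `n` jumps over. -/
noncomputable def s (n : ℕ) : ℕ := A (n - 1) (p n + 1)

/-- The index permutation used to pass from row `n` to row `n+1`. -/
def cyc (q L : ℕ) : ℕ → ℕ := fun j =>
  if j < q then j else if j < q + L then j + 1 else if j = q + L then q else j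

lemma cyc_inj (q L : ℕ) : Function.Injective (cyc q L) := by
  intro a b h
  unfold cyc at h
  split_ifs at h <;> omega

lemma cyc_surj (q L : ℕ) : Function.Surjective (cyc q L) := by
  intro b
  refine ⟨if b < q then b else if b = q then q + L else if b ≤ q + L then b - 1 else b, ?_⟩
  unfold cyc
  split_ifs <;> omega

lemma cyc_mono (q L a b : ℕ) (ha : a ≠ q + L) (hb : b ≠ q + L) :
    a < b ↔ cyc q L a < cyc q L b := by
  unfold cyc; split_ifs <;> omega

lemma cyc_top (q L : ℕ) : cyc q L (q + L) = q := by
  unfold cyc; split_ifs <;> omega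

lemma cyc_self (q L : ℕ) (hL : 1 ≤ L) : cyc q L q = q + 1 := by
  unfold cyc; split_ifs <;> omega

lemma grand (n : ℕ) : Function.Bijective (A n) ∧
    (∀ a b, n < A n a → n < A n b → (a < b ↔ A n a < A n b)) ∧
    (∀ t, 1 ≤ t → t ≤ n → s t < t → ∀ a b, A n a = s t → n < A n b → a < b) := by
  induction n with
  | zero =>
    refine ⟨⟨fun a b h => h, fun b => ⟨b, rfl⟩⟩, fun a b _ _ => Iff.rfl, ?_⟩
    intro t ht1 ht2; omega
  | succ n ih =>
    obtain ⟨hbij, hmono, hjinv⟩ := ih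
    have hq : A n (p (n+1)) = n + 1 := Nat.sInf_mem (hbij.2 (n+1))
    have hstep : ∀ j, A (n+1) j = A n (cyc (p (n+1)) (n+1) j) := by
      intro j
      have h1 : A (n+1) j =
          (if j < p (n+1) then A n j
           else if j < p (n+1) + (n+1) then A n (j+1)
           else if j = p (n+1) + (n+1) then n + 1
           else A n j) := rfl
      rw [h1]
      unfold cyc
      split_ifs <;> first | rfl | (exact hq.symm)
    have hbij' : Function.Bijective (A (n+1)) := by
      have : A (n+1) = A n ∘ cyc (p (n+1)) (n+1) := funext hstep
      rw [this]
      exact hbij.comp ⟨cyc_inj _ _, cyc_surj _ _⟩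
    refine ⟨hbij', ?_, ?_⟩
    · intro a b ha hb
      rw [hstep a] at ha; rw [hstep b] at hb; rw [hstep a, hstep b]
      have hane : a ≠ p (n+1) + (n+1) := by
        intro h; rw [h, cyc_top] at ha; omega
      have hbne : b ≠ p (n+1) + (n+1) := by
        intro h; rw [h, cyc_top] at hb; omega
      rw [cyc_mono _ _ _ _ hane hbne]
      exact hmono (cyc (p (n+1)) (n+1) a) (cyc (p (n+1)) (n+1) b) (by omega) (by omega)
    · intro t ht1 ht2 hst a b hAa hAb
      rw [hstep] at hAa hAb
      have hbne : b ≠ p (n+1) + (n+1) := by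
        intro h; rw [h, cyc_top] at hAb; omega
      rcases Nat.lt_or_ge t (n+1) with htn | htn
      · have hane : a ≠ p (n+1) + (n+1) := by
          intro h; rw [h, cyc_top] at hAa; omega
        have := hjinv t ht1 (by omega) hst (cyc (p (n+1)) (n+1) a) (cyc (p (n+1)) (n+1) b) hAa (by omega)
        exact (cyc_mono _ _ _ _ hane hbne).mpr this
      · have ht : t = n + 1 := by omega
        subst ht
        have hs1 : s (n+1) = A n (p (n+1) + 1) := rfl
        rw [hs1] at hAa hst
        have hca : cyc (p (n+1)) (n+1) a = p (n+1) + 1 := hbij.1 hAa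
        have ha : a = p (n+1) := by
          apply cyc_inj (p (n+1)) (n+1)
          rw [hca, cyc_self _ _ (by omega)]
        -- now show b > p (n+1)
        have h2 : p (n+1) < cyc (p (n+1)) (n+1) b := by
          have := hmono (p (n+1)) (cyc (p (n+1)) (n+1) b) (by omega) (by omega)
          omega
        have h3 : cyc (p (n+1)) (n+1) b ≠ p (n+1) + 1 := by
          intro h; rw [h] at hAb; omega
        have h4 : p (n+1) + 2 ≤ cyc (p (n+1)) (n+1) b := by omega
        unfold cyc at h4
        split_ifs at h4 <;> omega

lemma sval' (n : ℕ) (hn : 1 ≤ n) : s n = n + 1 ∨ s n < n := by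
  obtain ⟨t, rfl⟩ : ∃ t, n = t + 1 := ⟨n - 1, by omega⟩
  obtain ⟨hbij, hmono, -⟩ := grand t
  have hq : A t (p (t+1)) = t + 1 := Nat.sInf_mem (hbij.2 (t+1))
  have hs1 : s (t+1) = A t (p (t+1) + 1) := rfl
  rcases Nat.lt_or_ge (A t (p (t+1) + 1)) (t+1) with h1 | h1
  · right; omega
  · left
    have hne : A t (p (t+1) + 1) ≠ t + 1 := by
      intro h
      have := hbij.1 (h.trans hq.symm)
      omega
    obtain ⟨w, hw⟩ := hbij.2 (t+2)
    have hpw : p (t+1) < w := by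
      have := hmono (p (t+1)) w (by omega) (by omega)
      omega
    have h2 : ¬ (t + 2 < A t (p (t+1) + 1)) := by
      intro h
      have := hmono w (p (t+1) + 1) (by omega) (by omega)
      omega
    omega

lemma no_two (a b : ℕ) (ha1 : 1 ≤ a) (hab : a < b) (hsa : s a < a) (hse : s a = s b) :
    False := by
  obtain ⟨u, rfl⟩ : ∃ u, b = u + 1 := ⟨b - 1, by omega⟩
  obtain ⟨hbij, hmono, hjinv⟩ := grand u
  have hq : A u (p (u+1)) = u + 1 := Nat.sInf_mem (hbij.2 (u+1))
  have hsb : s (u+1) = A u (p (u+1) + 1) := rfl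
  have h1 : A u (p (u+1) + 1) = s a := by rw [← hsb, ← hse]
  have := hjinv a ha1 (by omega) hsa (p (u+1) + 1) (p (u+1)) h1 (by omega)
  omega

theorem sada_no_value_three_times :
    ¬ ∃ (i j k m : ℕ), 1 ≤ i ∧ i < j ∧ j < k ∧ s i = m ∧ s j = m ∧ s k = m := by
  rintro ⟨i, j, k, m, hi, hij, hjk, hsi, hsj, hsk⟩
  rcases sval' j (by omega) with hj | hj
  · rcases sval' i hi with h | h <;> omega
  · rcases sval' k (by omega) with hk | hk
    · omega
    · exact no_two j k (by omega) hjk (by omega) (by rw [hsj, hsk])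
end

section
/- For every n ≥ 1, the last element that n jumps over satisfies t(n) = ⌊(n+1)φ⌋ − 1. -/
/-- `t n` is the last element that `n` jumps over. -/
noncomputable def t (n : ℕ) : ℕ := A (n - 1) (p n + n)

/-!
Write `⌊mφ⌋` and `⌊mφ²⌋ = m + ⌊mφ⌋` for the lower and upper Wythoff sequences; by Rayleigh's
theorem they partition the positive integers. By induction on `n`, row `n` of the array is the
identity except on the window of positions `j` with `⌊(n+2)φ⌋ ≤ j + n + 2 ≤ ⌊(n+1)φ²⌋`, where it
holds `m - 1` for the `m` with `j + n + 2 ∈ {⌊mφ⌋, ⌊mφ²⌋}`. The induction step needs only that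
consecutive terms of `⌊mφ⌋` differ by 1 or 2, and two floor identities for `⌊mφ⌋`. Hence `n + 1`
stands at the left end `⌊(n+2)φ⌋ - (n+2)` of the window, and jumps to `⌊(n+2)φ⌋ - 1`, a position
past the window, whose entry is therefore `⌊(n+2)φ⌋ - 1`.
-/

namespace HurtSada

lemma phi_sq : phi ^ 2 = phi + 1 := Real.goldenRatio_sq
lemma one_lt_phi : 1 < phi := Real.one_lt_goldenRatio
lemma phi_lt_two : phi < 2 := Real.goldenRatio_lt_two
lemma phi_pos : 0 < phi := Real.goldenRatio_pos
lemma irrational_phi : Irrational phi := Real.goldenRatio_irrational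

lemma holderConjugate_phi : phi.HolderConjugate (phi + 1) := by
  rw [Real.holderConjugate_iff_eq_conjExponent one_lt_phi, eq_div_iff (by linarith [one_lt_phi])]
  nlinarith [phi_sq]

lemma natCast_mul_phi_nonneg (m : ℕ) : 0 ≤ (m : ℝ) * phi :=
  mul_nonneg m.cast_nonneg phi_pos.le

noncomputable def lowerWythoff (m : ℕ) : ℕ := ⌊(m : ℝ) * phi⌋₊

/-- `⌊m φ²⌋`, as `φ² = φ + 1`. -/
noncomputable def upperWythoff (m : ℕ) : ℕ := m + lowerWythoff m

lemma lowerWythoff_eq_iff {m k : ℕ} :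
    lowerWythoff m = k ↔ (k : ℝ) ≤ m * phi ∧ m * phi < k + 1 :=
  Nat.floor_eq_iff (natCast_mul_phi_nonneg m)

lemma lowerWythoff_le (m : ℕ) : (lowerWythoff m : ℝ) ≤ m * phi :=
  Nat.floor_le (natCast_mul_phi_nonneg m)

lemma lt_lowerWythoff_add_one (m : ℕ) : m * phi < lowerWythoff m + 1 :=
  Nat.lt_floor_add_one _

lemma lowerWythoff_lt {m : ℕ} (hm : 0 < m) : (lowerWythoff m : ℝ) < m * phi :=
  (lowerWythoff_le m).lt_of_ne fun h ↦ (irrational_phi.natCast_mul hm.ne').ne_nat _ h.symm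

lemma lowerWythoff_lt_iff {m k : ℕ} : lowerWythoff m < k ↔ m * phi < k :=
  Nat.floor_lt (natCast_mul_phi_nonneg m)

lemma le_lowerWythoff_iff {m k : ℕ} : k ≤ lowerWythoff m ↔ (k : ℝ) ≤ m * phi :=
  Nat.le_floor_iff (natCast_mul_phi_nonneg m)

lemma lowerWythoff_add_one_le (m : ℕ) : lowerWythoff m + 1 ≤ lowerWythoff (m + 1) := by
  rw [le_lowerWythoff_iff]
  push_cast
  nlinarith [lowerWythoff_le m, one_lt_phi]

lemma lowerWythoff_succ_le (m : ℕ) : lowerWythoff (m + 1) ≤ lowerWythoff m + 2 := by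
  rw [← Nat.lt_succ_iff, lowerWythoff_lt_iff]
  push_cast
  nlinarith [lt_lowerWythoff_add_one m, phi_lt_two]

lemma lowerWythoff_strictMono : StrictMono lowerWythoff :=
  strictMono_nat_of_lt_succ fun m ↦ lowerWythoff_add_one_le m

lemma le_lowerWythoff (m : ℕ) : m ≤ lowerWythoff m := by
  rw [le_lowerWythoff_iff]
  nlinarith [one_lt_phi, m.cast_nonneg (α := ℝ)]

lemma lt_lowerWythoff {m : ℕ} (hm : 2 ≤ m) : m < lowerWythoff m := by
  rw [Nat.lt_iff_add_one_le, le_lowerWythoff_iff]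
  have : (2 : ℝ) ≤ m := by exact_mod_cast hm
  push_cast
  nlinarith [phi_sq, one_lt_phi]

lemma lowerWythoff_lt_two_mul {m : ℕ} (hm : 0 < m) : lowerWythoff m < 2 * m := by
  rw [lowerWythoff_lt_iff]
  have : (0 : ℝ) < m := by exact_mod_cast hm
  push_cast
  nlinarith [phi_lt_two]

lemma lowerWythoff_ne_upperWythoff {a b : ℕ} (ha : 0 < a) (hb : 0 < b) :
    lowerWythoff a ≠ upperWythoff b := by
  intro h
  have hlower : (lowerWythoff a : ℤ) = beattySeq phi a := by
    rw [beattySeq, lowerWythoff, Int.natCast_floor_eq_floor (natCast_mul_phi_nonneg a), Int.cast_natCast]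
  have hupper : (upperWythoff b : ℤ) = beattySeq (phi + 1) b := by
    rw [beattySeq, upperWythoff, lowerWythoff, Int.cast_natCast, mul_add_one, Int.floor_add_natCast]
    push_cast
    rw [Int.natCast_floor_eq_floor (natCast_mul_phi_nonneg b), add_comm]
  have hpos : (lowerWythoff a : ℤ) ∈ {n : ℤ | 0 < n} := by
    have := le_lowerWythoff a
    show 0 < (lowerWythoff a : ℤ)
    omega
  rw [← irrational_phi.beattySeq_symmDiff_beattySeq_pos holderConjugate_phi, Set.mem_symmDiff] at hpos
  have h1 : (lowerWythoff a : ℤ) ∈ {beattySeq phi k | k > 0} := ⟨a, by exact_mod_cast ha, hlower.symm⟩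
  have h2 : (lowerWythoff a : ℤ) ∈ {beattySeq (phi + 1) k | k > 0} :=
    ⟨b, by exact_mod_cast hb, by rw [h, hupper]⟩
  tauto

lemma lowerWythoff_eq_add_of_lt_of_le {k i : ℕ} (h₁ : lowerWythoff k < i)
    (h₂ : i ≤ lowerWythoff (k + 1)) : lowerWythoff i = i + k := by
  have hk : (k : ℝ) * phi < i := by
    have : ((lowerWythoff k + 1 : ℕ) : ℝ) ≤ i := by exact_mod_cast h₁
    push_cast at this
    linarith [lt_lowerWythoff_add_one k]
  have hk1 : (i : ℝ) < (k + 1) * phi := by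
    have : (i : ℝ) ≤ lowerWythoff (k + 1) := by exact_mod_cast h₂
    have := lowerWythoff_lt (Nat.succ_pos k)
    push_cast at this
    linarith
  have hφ : 0 < phi - 1 := by linarith [one_lt_phi]
  rw [lowerWythoff_eq_iff]
  push_cast
  constructor <;> nlinarith [mul_lt_mul_of_pos_right hk hφ, mul_lt_mul_of_pos_right hk1 hφ, phi_sq]

lemma lowerWythoff_add_one_eq_of_gap_two {k q : ℕ} (hq : q + k = lowerWythoff k)
    (hgap : lowerWythoff k + 2 ≤ lowerWythoff (k + 1)) : lowerWythoff (q + 1) = k := by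
  have hk : (k : ℝ) * phi < q + k + 1 := by
    have : ((q + k : ℕ) : ℝ) = lowerWythoff k := by exact_mod_cast hq
    push_cast at this
    linarith [lt_lowerWythoff_add_one k]
  have hk1 : (q : ℝ) + k + 2 < (k + 1) * phi := by
    have : ((q + k + 2 : ℕ) : ℝ) ≤ lowerWythoff (k + 1) := by exact_mod_cast (by omega : _)
    have := lowerWythoff_lt (Nat.succ_pos k)
    push_cast at *
    linarith
  have hφ : 0 < phi := phi_pos
  rw [lowerWythoff_eq_iff]
  push_cast
  constructor <;> nlinarith [mul_lt_mul_of_pos_right hk hφ, mul_lt_mul_of_pos_right hk1 hφ, phi_sq]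

/-- For `N ≥ 1`, the unique `m` such that `N` is `⌊(m + 1) φ⌋` or `⌊(m + 1) φ²⌋`. -/
noncomputable def wythoffIndex (N : ℕ) : ℕ :=
  sInf {m | lowerWythoff (m + 1) = N ∨ upperWythoff (m + 1) = N}

lemma wythoffIndex_lowerWythoff (m : ℕ) : wythoffIndex (lowerWythoff (m + 1)) = m := by
  suffices {k | lowerWythoff (k + 1) = lowerWythoff (m + 1) ∨
      upperWythoff (k + 1) = lowerWythoff (m + 1)} = {m} by
    rw [wythoffIndex, this, csInf_singleton]
  ext k
  have hne := (lowerWythoff_ne_upperWythoff m.succ_pos k.succ_pos).symm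
  simp [lowerWythoff_strictMono.injective.eq_iff, hne]

lemma wythoffIndex_upperWythoff (m : ℕ) : wythoffIndex (upperWythoff (m + 1)) = m := by
  suffices {k | lowerWythoff (k + 1) = upperWythoff (m + 1) ∨
      upperWythoff (k + 1) = upperWythoff (m + 1)} = {m} by
    rw [wythoffIndex, this, csInf_singleton]
  ext k
  have hne := lowerWythoff_ne_upperWythoff k.succ_pos m.succ_pos
  have hmono : StrictMono upperWythoff := strictMono_id.add lowerWythoff_strictMono
  simp [hmono.injective.eq_iff, hne]

def jump (r : ℕ → ℕ) (p k j : ℕ) : ℕ :=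
  if j < p then r j
  else if j < p + k then r (j + 1)
  else if j = p + k then k
  else r j

lemma A_succ (n : ℕ) : A (n + 1) = jump (A n) (sInf {i | A n i = n + 1}) (n + 1) := rfl

noncomputable def rowFormula (n j : ℕ) : ℕ :=
  if lowerWythoff (n + 2) ≤ j + n + 2 ∧ j < lowerWythoff (n + 1) then wythoffIndex (j + n + 2)
  else j

lemma rowFormula_of_mem {n j : ℕ} (h₁ : lowerWythoff (n + 2) ≤ j + n + 2)
    (h₂ : j < lowerWythoff (n + 1)) : rowFormula n j = wythoffIndex (j + n + 2) :=
  if_pos ⟨h₁, h₂⟩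

lemma rowFormula_of_lt {n j : ℕ} (h : j + n + 2 < lowerWythoff (n + 2)) : rowFormula n j = j :=
  if_neg fun h' ↦ (h.not_ge h'.1).elim

lemma rowFormula_of_le {n j : ℕ} (h : lowerWythoff (n + 1) ≤ j) : rowFormula n j = j :=
  if_neg fun h' ↦ (h.not_gt h'.2).elim

lemma rowFormula_zero : rowFormula 0 = id := by
  funext j
  have h2 : 2 < lowerWythoff (0 + 2) := lt_lowerWythoff le_rfl
  have h1 : lowerWythoff (0 + 1) < 2 := lowerWythoff_lt_two_mul Nat.one_pos
  by_cases hj : j = 0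
  · subst hj; exact rowFormula_of_lt (by omega)
  · exact rowFormula_of_le (by omega)

lemma rowFormula_position (n : ℕ) :
    rowFormula n (lowerWythoff (n + 2) - (n + 2)) = n + 1 := by
  have h12 : lowerWythoff (n + 2) ≤ lowerWythoff (n + 1) + 2 := lowerWythoff_succ_le _
  have hL2 : n + 2 < lowerWythoff (n + 2) := lt_lowerWythoff (by omega)
  by_cases h : lowerWythoff (n + 2) - (n + 2) < lowerWythoff (n + 1)
  · rw [rowFormula_of_mem (by omega) h,
      show lowerWythoff (n + 2) - (n + 2) + n + 2 = lowerWythoff (n + 2) by omega]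
    exact wythoffIndex_lowerWythoff (n + 1)
  · have h1 : n + 1 ≤ lowerWythoff (n + 1) := le_lowerWythoff _
    have h2 : lowerWythoff (n + 2) < 2 * (n + 2) := lowerWythoff_lt_two_mul (by omega)
    rw [rowFormula_of_le (by omega)]
    omega

lemma sInf_rowFormula_eq (n : ℕ) :
    sInf {i | rowFormula n i = n + 1} = lowerWythoff (n + 2) - (n + 2) := by
  have hpos := rowFormula_position n
  refine le_antisymm (Nat.sInf_le hpos) (le_csInf ⟨_, hpos⟩ fun k hk ↦ ?_)
  by_contra! hlt
  have := lowerWythoff_lt_two_mul (m := n + 2) (by omega)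
  replace hk : rowFormula n k = n + 1 := hk
  rw [rowFormula_of_lt (by omega)] at hk
  omega

lemma rowFormula_succ_of_shifted {n j : ℕ} (h₁ : lowerWythoff (n + 2) - (n + 2) ≤ j)
    (h₂ : j + 1 < lowerWythoff (n + 2)) : rowFormula (n + 1) j = rowFormula n (j + 1) := by
  have hL2 : n + 2 < lowerWythoff (n + 2) := lt_lowerWythoff (by omega)
  have h12 : lowerWythoff (n + 2) ≤ lowerWythoff (n + 1) + 2 := lowerWythoff_succ_le _
  have h23 : lowerWythoff (n + 3) ≤ lowerWythoff (n + 2) + 2 := lowerWythoff_succ_le _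
  by_cases hnew : lowerWythoff (n + 3) ≤ j + n + 3
  · rw [rowFormula_of_mem (n := n + 1) hnew (by omega : j < lowerWythoff (n + 2))]
    by_cases hold : j + 1 < lowerWythoff (n + 1)
    · rw [rowFormula_of_mem (by omega) hold]
      ring_nf
    · have hj : lowerWythoff (j + 2) = j + 2 + (n + 1) :=
        lowerWythoff_eq_add_of_lt_of_le (by omega) (by omega : j + 2 ≤ lowerWythoff (n + 2))
      rw [rowFormula_of_le (not_lt.1 hold), show j + (n + 1) + 2 = lowerWythoff (j + 2) by omega]
      exact wythoffIndex_lowerWythoff (j + 1)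
  · -- `j` is the left end of the old window, and the window has moved one place to the right.
    have hq : lowerWythoff (j + 1) = n + 2 :=
      lowerWythoff_add_one_eq_of_gap_two (by omega) (by omega : _ ≤ lowerWythoff (n + 3))
    have hj : j + 1 < lowerWythoff (j + 1) := lt_lowerWythoff (by omega)
    have hmono : lowerWythoff (j + 1) ≤ lowerWythoff (n + 1) :=
      lowerWythoff_strictMono.monotone (by omega)
    rw [rowFormula_of_lt (n := n + 1) (by omega : j + n + 3 < lowerWythoff (n + 3)),
      rowFormula_of_mem (by omega) (by omega),
      show j + 1 + n + 2 = upperWythoff (j + 1) by rw [upperWythoff]; omega,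
      wythoffIndex_upperWythoff]

lemma rowFormula_succ (n : ℕ) :
    rowFormula (n + 1) = jump (rowFormula n) (lowerWythoff (n + 2) - (n + 2)) (n + 1) := by
  funext j
  have hL2 : n + 2 < lowerWythoff (n + 2) := lt_lowerWythoff (by omega)
  have h12 : lowerWythoff (n + 1) < lowerWythoff (n + 2) := lowerWythoff_strictMono (by omega)
  have h23 : lowerWythoff (n + 2) < lowerWythoff (n + 3) := lowerWythoff_strictMono (by omega)
  have h23' : lowerWythoff (n + 3) ≤ lowerWythoff (n + 2) + 2 := lowerWythoff_succ_le _
  rw [jump]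
  split_ifs with h₁ h₂ h₃
  · rw [rowFormula_of_lt (n := n + 1) (by omega : j + n + 3 < lowerWythoff (n + 3)),
      rowFormula_of_lt (n := n) (by omega)]
  · exact rowFormula_succ_of_shifted (by omega) (by omega)
  · rw [rowFormula_of_mem (n := n + 1) (by omega : lowerWythoff (n + 3) ≤ j + n + 3)
        (by omega : j < lowerWythoff (n + 2)),
      show j + (n + 1) + 2 = upperWythoff (n + 2) by rw [upperWythoff]; omega]
    exact wythoffIndex_upperWythoff (n + 1)
  · rw [rowFormula_of_le (n := n + 1) (by omega : lowerWythoff (n + 2) ≤ j),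
      rowFormula_of_le (n := n) (by omega)]

theorem A_eq_rowFormula : ∀ n, A n = rowFormula n
  | 0 => rowFormula_zero.symm
  | n + 1 => by rw [A_succ, A_eq_rowFormula n, sInf_rowFormula_eq, rowFormula_succ]

end HurtSada

open HurtSada in
theorem last_jumped_formula (n : ℕ) (hn : 1 ≤ n) :
    t n = ⌊((n : ℝ) + 1) * phi⌋₊ - 1 := by
  obtain ⟨k, rfl⟩ : ∃ k, n = k + 1 := ⟨n - 1, by omega⟩
  have hp : p (k + 1) = lowerWythoff (k + 2) - (k + 2) := by
    rw [p, Nat.add_sub_cancel, A_eq_rowFormula, sInf_rowFormula_eq]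
  have hfloor : ⌊(((k + 1 : ℕ) : ℝ) + 1) * phi⌋₊ = lowerWythoff (k + 2) := by
    rw [lowerWythoff]
    push_cast
    ring_nf
  have hL2 : k + 2 < lowerWythoff (k + 2) := lt_lowerWythoff (by omega)
  have h12 : lowerWythoff (k + 1) < lowerWythoff (k + 2) := lowerWythoff_strictMono (by omega)
  rw [t, hp, Nat.add_sub_cancel, A_eq_rowFormula, rowFormula_of_le (by omega), hfloor]
  omega
end

section
/- For every n ≥ 1, if the superdiagonal entry d'(n) = A(n−1,n) of the Hurt-Sada array satisfies d'(n) ≥ n, then d'(n) = ⌊(2φ − 2)n + 1/2⌋. -/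
open Real Function

lemma phi_sq : phi ^ 2 = phi + 1 := goldenRatio_sq

lemma one_lt_phi : 1 < phi := one_lt_goldenRatio

lemma three_halves_lt_phi : 3 / 2 < phi := by
  have : 2 < √5 := (lt_sqrt zero_le_two).2 (by norm_num)
  rw [phi]; linarith

lemma phi_lt_five_thirds : phi < 5 / 3 := by
  have : √5 < 7 / 3 := (sqrt_lt' (by norm_num)).2 (by norm_num)
  rw [phi]; linarith

lemma phi_lt_two : phi < 2 := goldenRatio_lt_two

lemma natCast_mul_phi_ne {m : ℕ} (hm : m ≠ 0) (k : ℕ) : (m : ℝ) * phi ≠ k :=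
  (goldenRatio_irrational.natCast_mul hm).ne_nat k

noncomputable def lowerWythoff (m : ℕ) : ℕ := ⌊(m : ℝ) * phi⌋₊

noncomputable def upperWythoff (m : ℕ) : ℕ := m + lowerWythoff m

lemma lowerWythoff_eq_iff {m k : ℕ} :
    lowerWythoff m = k ↔ (k : ℝ) ≤ m * phi ∧ m * phi < k + 1 :=
  Nat.floor_eq_iff (by positivity [one_lt_phi])

lemma lowerWythoff_le_mul (m : ℕ) : (lowerWythoff m : ℝ) ≤ m * phi :=
  (lowerWythoff_eq_iff.1 rfl).1

lemma mul_lt_lowerWythoff_add_one (m : ℕ) : m * phi < lowerWythoff m + 1 :=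
  (lowerWythoff_eq_iff.1 rfl).2

lemma lowerWythoff_lt_mul {m : ℕ} (hm : m ≠ 0) : (lowerWythoff m : ℝ) < m * phi :=
  (lowerWythoff_le_mul m).lt_of_ne (natCast_mul_phi_ne hm _).symm

lemma lowerWythoff_zero : lowerWythoff 0 = 0 := by simp [lowerWythoff]

lemma lowerWythoff_two : lowerWythoff 2 = 3 := by
  rw [lowerWythoff_eq_iff]; push_cast
  constructor <;> linarith [three_halves_lt_phi, phi_lt_two]

lemma lowerWythoff_three : lowerWythoff 3 = 4 := by
  rw [lowerWythoff_eq_iff]; push_cast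
  constructor <;> linarith [three_halves_lt_phi, phi_lt_five_thirds]

lemma add_three_le_lowerWythoff_add_two (m : ℕ) : m + 3 ≤ lowerWythoff (m + 2) :=
  Nat.le_floor (by push_cast; nlinarith [three_halves_lt_phi])

lemma lowerWythoff_add_one_le_succ (m : ℕ) : lowerWythoff m + 1 ≤ lowerWythoff (m + 1) :=
  Nat.le_floor (by push_cast; linarith [lowerWythoff_le_mul m, one_lt_phi])

lemma lowerWythoff_succ_le_add_two (m : ℕ) : lowerWythoff (m + 1) ≤ lowerWythoff m + 2 := by
  have := lowerWythoff_le_mul (m + 1)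
  have := mul_lt_lowerWythoff_add_one m
  have : (lowerWythoff (m + 1) : ℝ) < lowerWythoff m + 3 := by push_cast at *; linarith [phi_lt_two]
  exact Nat.lt_succ_iff.1 (by exact_mod_cast this)

lemma lowerWythoff_strictMono : StrictMono lowerWythoff :=
  strictMono_nat_of_lt_succ lowerWythoff_add_one_le_succ

lemma upperWythoff_strictMono : StrictMono upperWythoff :=
  strictMono_id.add_monotone lowerWythoff_strictMono.monotone

lemma self_le_lowerWythoff (m : ℕ) : m ≤ lowerWythoff m :=
  lowerWythoff_strictMono.le_apply

lemma lowerWythoff_lt_two_mul {m : ℕ} (hm : m ≠ 0) : lowerWythoff m < 2 * m := by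
  have := lowerWythoff_lt_mul hm
  have : (lowerWythoff m : ℝ) < 2 * m := by nlinarith [phi_lt_two]
  exact_mod_cast this

lemma holderConjugate_phi : phi.HolderConjugate (phi + 1) := by
  rw [holderConjugate_iff]
  refine ⟨one_lt_phi, ?_⟩
  have : phi ≠ 0 := by linarith [one_lt_phi]
  have : phi + 1 ≠ 0 := by linarith [one_lt_phi]
  field_simp
  linarith [phi_sq]

lemma natCast_lowerWythoff (m : ℕ) : (lowerWythoff m : ℤ) = beattySeq phi m := by
  rw [lowerWythoff, Int.natCast_floor_eq_floor (by positivity [one_lt_phi])]; rfl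

lemma natCast_upperWythoff (m : ℕ) : (upperWythoff m : ℤ) = beattySeq (phi + 1) m := by
  rw [beattySeq, Int.cast_natCast, mul_add_one, add_comm, Int.floor_natCast_add, upperWythoff,
    Nat.cast_add, lowerWythoff, Int.natCast_floor_eq_floor (by positivity [one_lt_phi])]

lemma natCast_mem_beattySeq_pos_iff {r : ℝ} {f : ℕ → ℕ} (hf : ∀ k, (f k : ℤ) = beattySeq r k)
    (y : ℕ) : (y : ℤ) ∈ {beattySeq r k | k > 0} ↔ ∃ k, 0 < k ∧ f k = y := by
  constructor
  · rintro ⟨k, hk, hky⟩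
    lift k to ℕ using hk.le
    exact ⟨k, by exact_mod_cast hk, by exact_mod_cast (hf k).trans hky⟩
  · rintro ⟨k, hk, rfl⟩
    exact ⟨k, by exact_mod_cast hk, (hf k).symm⟩

open scoped symmDiff in
lemma exists_lowerWythoff_xor_upperWythoff {y : ℕ} (hy : 0 < y) :
    Xor (∃ s, 0 < s ∧ lowerWythoff s = y) (∃ t, 0 < t ∧ upperWythoff t = y) := by
  have hmem : (y : ℤ) ∈ {beattySeq phi k | k > 0} ∆ {beattySeq (phi + 1) k | k > 0} := by
    rw [Irrational.beattySeq_symmDiff_beattySeq_pos holderConjugate_phi goldenRatio_irrational]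
    exact Int.natCast_pos.2 hy
  rwa [Set.mem_symmDiff, natCast_mem_beattySeq_pos_iff natCast_lowerWythoff,
    natCast_mem_beattySeq_pos_iff natCast_upperWythoff] at hmem

lemma lowerWythoff_ne_upperWythoff (s : ℕ) {t : ℕ} (ht : 0 < t) :
    lowerWythoff s ≠ upperWythoff t := by
  intro h
  have hs : 0 < s := by
    by_contra! hs
    rw [Nat.le_zero.1 hs, lowerWythoff_zero, upperWythoff] at h
    omega
  rcases exists_lowerWythoff_xor_upperWythoff (hs.trans_le (self_le_lowerWythoff s)) with
    ⟨-, hne⟩ | ⟨-, hne⟩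
  exacts [hne ⟨t, ht, h.symm⟩, hne ⟨s, hs, rfl⟩]

open Classical in
noncomputable def wythoffRank (y : ℕ) : ℕ :=
  (if y ∈ Set.range lowerWythoff then invFun lowerWythoff y else invFun upperWythoff y) - 1

lemma wythoffRank_lowerWythoff (s : ℕ) : wythoffRank (lowerWythoff s) = s - 1 := by
  rw [wythoffRank, if_pos (Set.mem_range_self s),
    leftInverse_invFun lowerWythoff_strictMono.injective s]

lemma wythoffRank_upperWythoff {t : ℕ} (ht : 0 < t) : wythoffRank (upperWythoff t) = t - 1 := by
  rw [wythoffRank, if_neg (by rintro ⟨s, hs⟩; exact lowerWythoff_ne_upperWythoff s ht hs),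
    leftInverse_invFun upperWythoff_strictMono.injective t]

lemma lowerWythoff_lowerWythoff_succ (m : ℕ) :
    lowerWythoff (lowerWythoff (m + 1)) = lowerWythoff (m + 1) + m := by
  set a := lowerWythoff (m + 1)
  have h₁ : (a : ℝ) < (m + 1) * phi := by exact_mod_cast lowerWythoff_lt_mul m.succ_ne_zero
  have h₂ : ((m : ℝ) + 1) * phi < a + 1 := by exact_mod_cast mul_lt_lowerWythoff_add_one (m + 1)
  -- `θ = (m + 1) φ - a` is a fractional part in `(0, 1)`, hence so is `θ (φ - 1)`
  have key : (a : ℝ) * phi = a + m + 1 - ((m + 1) * phi - a) * (phi - 1) := by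
    linear_combination ((m : ℝ) + 1) * phi_sq
  rw [lowerWythoff_eq_iff]; push_cast
  constructor <;> nlinarith [one_lt_phi, phi_lt_two]

lemma lowerWythoff_lowerWythoff_add_one (m : ℕ) :
    lowerWythoff (lowerWythoff m + 1) = lowerWythoff m + m + 1 := by
  set a := lowerWythoff m
  have h₁ : (a : ℝ) ≤ m * phi := lowerWythoff_le_mul m
  have h₂ : (m : ℝ) * phi < a + 1 := mul_lt_lowerWythoff_add_one m
  have key : ((a : ℝ) + 1) * phi = a + m + phi - (m * phi - a) * (phi - 1) := by
    linear_combination (m : ℝ) * phi_sq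
  rw [lowerWythoff_eq_iff]; push_cast
  constructor <;> nlinarith [one_lt_phi, phi_lt_two]

lemma upperWythoff_of_lowerWythoff_succ_eq_add_two {m : ℕ}
    (h : lowerWythoff (m + 1) = lowerWythoff m + 2) :
    upperWythoff (lowerWythoff m - m + 1) = lowerWythoff m + 1 := by
  set a := lowerWythoff m
  have ham : m ≤ a := self_le_lowerWythoff m
  have h₁ : (a : ℝ) ≤ m * phi := lowerWythoff_le_mul m
  have h₂ : (m : ℝ) * phi < a + 1 := mul_lt_lowerWythoff_add_one m
  have h₃ : (a : ℝ) + 2 < (m + 1) * phi := by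
    exact_mod_cast h ▸ lowerWythoff_lt_mul m.succ_ne_zero
  have key : ((a : ℝ) - m + 1) * phi = m + phi * (1 - (m * phi - a)) := by
    linear_combination (m : ℝ) * phi_sq
  suffices lowerWythoff (a - m + 1) = m by rw [upperWythoff, this]; omega
  rw [lowerWythoff_eq_iff]; push_cast [ham]
  constructor <;> nlinarith [one_lt_phi, phi_lt_two, phi_sq]

lemma floor_phi_sub_one_mul_add_half_of_lowerWythoff {s k : ℕ} (h : lowerWythoff (s + 1) = k + 1) :
    ⌊(phi - 1) * k + 1 / 2⌋₊ = s := by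
  have h₁ : (k : ℝ) + 1 < (s + 1) * phi := by exact_mod_cast h ▸ lowerWythoff_lt_mul s.succ_ne_zero
  have h₂ : ((s : ℝ) + 1) * phi < k + 2 := by
    have := mul_lt_lowerWythoff_add_one (s + 1); push_cast [h] at this; linarith
  have key : (s : ℝ) + 1 = (s + 1) * phi * (phi - 1) := by linear_combination (-(s : ℝ) - 1) * phi_sq
  rw [Nat.floor_eq_iff (by nlinarith [one_lt_phi])]
  constructor <;> nlinarith [three_halves_lt_phi, phi_lt_five_thirds]

noncomputable def pivot (n : ℕ) : ℕ := lowerWythoff (n + 2) - (n + 2)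

lemma pivot_add_add_two (n : ℕ) : pivot n + n + 2 = lowerWythoff (n + 2) := by
  have := self_le_lowerWythoff (n + 2)
  rw [pivot]; omega

lemma pivot_pos (n : ℕ) : 0 < pivot n := by
  have := add_three_le_lowerWythoff_add_two n
  rw [pivot]; omega

lemma pivot_le (n : ℕ) : pivot n ≤ n + 1 := by
  have : lowerWythoff (n + 2) < 2 * (n + 2) := lowerWythoff_lt_two_mul (by omega)
  rw [pivot]; omega

lemma pivot_succ_add_add_three (n : ℕ) : pivot (n + 1) + n + 3 = lowerWythoff (n + 3) :=
  pivot_add_add_two (n + 1)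

lemma pivot_le_pivot_succ (n : ℕ) : pivot n ≤ pivot (n + 1) := by
  have : lowerWythoff (n + 2) + 1 ≤ lowerWythoff (n + 3) := lowerWythoff_add_one_le_succ _
  have := pivot_add_add_two n
  have := pivot_succ_add_add_three n
  omega

lemma pivot_succ_le (n : ℕ) : pivot (n + 1) ≤ pivot n + 1 := by
  have : lowerWythoff (n + 3) ≤ lowerWythoff (n + 2) + 2 := lowerWythoff_succ_le_add_two _
  have := pivot_add_add_two n
  have := pivot_succ_add_add_three n
  omega

lemma pivot_succ_le_add (n : ℕ) : pivot (n + 1) ≤ pivot n + n := by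
  rcases n with _ | n
  · change pivot 1 ≤ pivot 0
    rw [pivot, pivot, lowerWythoff_three, lowerWythoff_two]
  · have := pivot_succ_le (n + 1)
    omega

noncomputable def hurtSadaRow (n j : ℕ) : ℕ :=
  if pivot n ≤ j ∧ j ≤ pivot n + n then wythoffRank (j + n + 2) else j

lemma hurtSadaRow_of_mem {n j : ℕ} (h₁ : pivot n ≤ j) (h₂ : j ≤ pivot n + n) :
    hurtSadaRow n j = wythoffRank (j + n + 2) :=
  if_pos ⟨h₁, h₂⟩

lemma hurtSadaRow_of_lt {n j : ℕ} (h : j < pivot n) : hurtSadaRow n j = j :=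
  if_neg (by omega)

lemma hurtSadaRow_of_gt {n j : ℕ} (h : pivot n + n < j) : hurtSadaRow n j = j :=
  if_neg (by omega)

lemma hurtSadaRow_pivot (n : ℕ) : hurtSadaRow n (pivot n) = n + 1 := by
  rw [hurtSadaRow_of_mem le_rfl (by omega), pivot_add_add_two, wythoffRank_lowerWythoff]
  rfl

lemma sInf_hurtSadaRow_eq_pivot (n : ℕ) : sInf {i | hurtSadaRow n i = n + 1} = pivot n := by
  refine le_antisymm (Nat.sInf_le (hurtSadaRow_pivot n)) (le_csInf ⟨_, hurtSadaRow_pivot n⟩ ?_)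
  intro i (hi : hurtSadaRow n i = n + 1)
  by_contra! hlt
  have := pivot_le n
  rw [hurtSadaRow_of_lt hlt] at hi
  omega

lemma hurtSadaRow_succ_of_mem {n j : ℕ} (h₁ : pivot n ≤ j) (h₂ : j < pivot n + n) :
    hurtSadaRow (n + 1) j = hurtSadaRow n (j + 1) := by
  have hP := pivot_add_add_two n
  have hP' := pivot_succ_add_add_three n
  have := pivot_le_pivot_succ n
  have := pivot_succ_le n
  rw [hurtSadaRow_of_mem (n := n) (j := j + 1) (by omega) (by omega)]
  rcases le_or_gt (pivot (n + 1)) j with h | h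
  · rw [hurtSadaRow_of_mem h (by omega)]
    congr 1; omega
  · have hgap : lowerWythoff (n + 3) = lowerWythoff (n + 2) + 2 := by omega
    have hup : upperWythoff (pivot n + 1) = lowerWythoff (n + 2) + 1 :=
      upperWythoff_of_lowerWythoff_succ_eq_add_two hgap
    rw [hurtSadaRow_of_lt h, show j + 1 + n + 2 = upperWythoff (pivot n + 1) by omega,
      wythoffRank_upperWythoff (by omega)]
    omega

lemma hurtSadaRow_succ_pivot_add (n : ℕ) :
    hurtSadaRow (n + 1) (pivot n + n) = pivot n + n + 1 := by
  have hP := pivot_add_add_two n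
  have := pivot_le_pivot_succ n
  have := pivot_succ_le_add n
  have : lowerWythoff (lowerWythoff (n + 2)) = lowerWythoff (n + 2) + (n + 1) :=
    lowerWythoff_lowerWythoff_succ (n + 1)
  rw [hurtSadaRow_of_mem (by omega) (by omega),
    show pivot n + n + (n + 1) + 2 = lowerWythoff (lowerWythoff (n + 2)) by omega,
    wythoffRank_lowerWythoff]
  omega

lemma hurtSadaRow_succ_pivot_add_add_one (n : ℕ) :
    hurtSadaRow (n + 1) (pivot n + n + 1) = n + 1 := by
  have hP := pivot_add_add_two n
  have := pivot_le_pivot_succ n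
  have := pivot_succ_le n
  rw [hurtSadaRow_of_mem (by omega) (by omega),
    show pivot n + n + 1 + (n + 1) + 2 = upperWythoff (n + 2) by rw [upperWythoff]; omega,
    wythoffRank_upperWythoff (by omega)]
  rfl

lemma hurtSadaRow_succ_of_gt {n j : ℕ} (hj : pivot n + n + 1 < j) : hurtSadaRow (n + 1) j = j := by
  have hP := pivot_add_add_two n
  have hP' := pivot_succ_add_add_three n
  have := pivot_succ_le n
  rcases le_or_gt j (pivot (n + 1) + (n + 1)) with h | h
  · have : lowerWythoff (lowerWythoff (n + 2) + 1) = lowerWythoff (n + 2) + (n + 2) + 1 :=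
      lowerWythoff_lowerWythoff_add_one (n + 2)
    rw [hurtSadaRow_of_mem (by omega) h,
      show j + (n + 1) + 2 = lowerWythoff (lowerWythoff (n + 2) + 1) by omega,
      wythoffRank_lowerWythoff]
    omega
  · exact hurtSadaRow_of_gt h

lemma hurtSadaRow_succ (n j : ℕ) :
    hurtSadaRow (n + 1) j =
      if j < pivot n then hurtSadaRow n j
      else if j < pivot n + (n + 1) then hurtSadaRow n (j + 1)
      else if j = pivot n + (n + 1) then n + 1
      else hurtSadaRow n j := by
  obtain hj | ⟨hj, hj'⟩ | rfl | rfl | hj : j < pivot n ∨ (pivot n ≤ j ∧ j < pivot n + n) ∨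
      j = pivot n + n ∨ j = pivot n + n + 1 ∨ pivot n + n + 1 < j := by omega
  · rw [if_pos hj, hurtSadaRow_of_lt hj, hurtSadaRow_of_lt (hj.trans_le (pivot_le_pivot_succ n))]
  · rw [if_neg (by omega), if_pos (by omega), hurtSadaRow_succ_of_mem hj hj']
  · rw [if_neg (by omega), if_pos (by omega), hurtSadaRow_succ_pivot_add,
      hurtSadaRow_of_gt (n := n) (by omega)]
  · rw [if_neg (by omega), if_neg (by omega), if_pos (by omega),
      hurtSadaRow_succ_pivot_add_add_one]
  · rw [if_neg (by omega), if_neg (by omega), if_neg (by omega), hurtSadaRow_succ_of_gt hj,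
      hurtSadaRow_of_gt (by omega)]

lemma A_eq_hurtSadaRow (n : ℕ) : A n = hurtSadaRow n := by
  induction n with
  | zero =>
    funext j
    have h0 : pivot 0 = 1 := by rw [pivot, lowerWythoff_two]
    rcases lt_trichotomy j 1 with hj | rfl | hj
    · rw [hurtSadaRow_of_lt (h0 ▸ hj)]; rfl
    · rw [hurtSadaRow_of_mem (by omega) (by omega),
        show 1 + 0 + 2 = lowerWythoff 2 from lowerWythoff_two.symm, wythoffRank_lowerWythoff]
      rfl
    · rw [hurtSadaRow_of_gt (by omega)]; rfl
  | succ n ih =>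
    funext j
    simp only [A, ih, sInf_hurtSadaRow_eq_pivot, hurtSadaRow_succ]

lemma A_superdiagonal (m : ℕ) : A m (m + 1) = wythoffRank (2 * m + 3) := by
  have := pivot_pos m
  have := pivot_le m
  rw [A_eq_hurtSadaRow, hurtSadaRow_of_mem (by omega) (by omega)]
  congr 1; omega

theorem superdiagonal_ge_formula (n : ℕ) (hn : 1 ≤ n) (h : n ≤ A (n - 1) n) :
    A (n - 1) n = ⌊(2 * phi - 2) * (n : ℝ) + 1 / 2⌋₊ := by
  obtain ⟨m, rfl⟩ := Nat.exists_eq_add_of_le' hn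
  rw [Nat.add_sub_cancel, A_superdiagonal] at h ⊢
  rcases (exists_lowerWythoff_xor_upperWythoff (by omega : 0 < 2 * m + 3)).or with
    ⟨s, hs, hsy⟩ | ⟨t, ht, hty⟩
  · obtain ⟨s, rfl⟩ : ∃ r, s = r + 1 := ⟨s - 1, by omega⟩
    rw [← hsy, wythoffRank_lowerWythoff, Nat.add_sub_cancel,
      ← floor_phi_sub_one_mul_add_half_of_lowerWythoff (k := 2 * m + 2) hsy]
    congr 1; push_cast; ring
  · have := self_le_lowerWythoff t
    rw [← hty, wythoffRank_upperWythoff ht] at h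
    rw [upperWythoff] at hty
    omega
end
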